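/- Let k be a field, O = k[[t]], F = k((t)), and W a finite-dimensional F-vector space with a nondegenerate F-bilinear form B which is symmetric or alternating. Let Λ be a self-dual O-lattice in W (Λ^⊥ = Λ, where Λ^⊥ = {w ∈ W : B(w,x) ∈ O for all x ∈ Λ}), and let S ⊆ W be a finitely generated O-submodule with B(S,S) ⊆ O. Then M := S + (S+Λ)^⊥ is a self-dual O-lattice in W: M is a finitely generated O-submodule spanning W and M^⊥ = M. -/

import Mathlib

/-! `L := S + Λ` is a lattice, so an `O`-basis of `L` is an `F`-basis of `W`, and `P := L^⊥` is
the `O`-span of the dual basis: a lattice with `P^⊥ = L` (for a symmetric or alternating form,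
integrality of `B x y` is symmetric in `x` and `y`). Hence `M^⊥ = S^⊥ ∩ P^⊥ = S^⊥ ∩ (S + Λ)`.
As `P = S^⊥ ∩ Λ^⊥ = S^⊥ ∩ Λ`, this contains `M`; conversely, if `s + l ∈ S^⊥` with `s ∈ S` and
`l ∈ Λ`, then `l ∈ S^⊥` because `S ⊆ S^⊥`, so `l ∈ P`. -/

open Module Submodule
open LinearMap (BilinForm)

section Lattice

variable {R K V : Type*} [CommRing R] [Field K] [Algebra R K]
  [AddCommGroup V] [Module K V] [Module R V] [IsScalarTower R K V]

theorem Module.Basis.span_extendOfIsLattice [IsFractionRing R K] {κ : Type*}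
    {M : Submodule R V} [IsLattice K M] (b : Basis κ R M) :
    span R (Set.range (b.extendOfIsLattice K)) = M := by
  have hrange : Set.range (b.extendOfIsLattice K) = M.subtype '' Set.range b := by
    rw [← Set.range_comp]
    ext
    simp
  rw [hrange, ← Submodule.map_span, b.span_eq, Submodule.map_top, range_subtype]

theorem Module.Basis.isLattice_span {ι : Type*} [Finite ι] (b : Basis ι K V) :
    IsLattice K (span R (Set.range b)) where
  fg := fg_span (Set.finite_range b)
  span_eq_top := by rw [span_span_of_tower, b.span_eq]

end Lattice

namespace LinearMap.BilinForm

section DualSubmodule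

variable {R S M : Type*} [CommRing R] [Field S] [Algebra R S]
  [AddCommGroup M] [Module R M] [Module S M] [IsScalarTower R S M] (B : BilinForm S M)

variable {B} in
theorem mem_dualSubmodule_iff_forall_mem_range {N : Submodule R M} {x : M} :
    x ∈ B.dualSubmodule N ↔ ∀ y ∈ N, B x y ∈ Set.range (algebraMap R S) :=
  forall₂_congr fun _ _ => mem_one

theorem dualSubmodule_sup (N₁ N₂ : Submodule R M) :
    B.dualSubmodule (N₁ ⊔ N₂) = B.dualSubmodule N₁ ⊓ B.dualSubmodule N₂ := by
  ext x
  simp only [mem_inf, mem_dualSubmodule]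
  constructor
  · intro h
    exact ⟨fun y hy => h y (mem_sup_left hy), fun y hy => h y (mem_sup_right hy)⟩
  · rintro ⟨h₁, h₂⟩ y hy
    obtain ⟨y₁, hy₁, y₂, hy₂, rfl⟩ := mem_sup.mp hy
    rw [map_add]
    exact add_mem (h₁ y₁ hy₁) (h₂ y₂ hy₂)

variable {B} in
theorem flip_dualSubmodule_of_isSymm_or_isAlt (hB : B.IsSymm ∨ B.IsAlt) (N : Submodule R M) :
    B.flip.dualSubmodule N = B.dualSubmodule N := by
  ext w
  refine forall₂_congr fun y _ => ?_
  rw [flip_apply]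
  rcases hB with hB | hB
  · rw [hB.eq]
  · rw [← hB.neg_eq, neg_mem_iff]

theorem dualSubmodule_sup_dualSubmodule_sup_eq_self {S Λ : Submodule R M}
    (hΛ : B.dualSubmodule Λ = Λ) (hS : S ≤ B.dualSubmodule S)
    (hL : B.dualSubmodule (B.dualSubmodule (S ⊔ Λ)) = S ⊔ Λ) :
    B.dualSubmodule (S ⊔ B.dualSubmodule (S ⊔ Λ)) = S ⊔ B.dualSubmodule (S ⊔ Λ) := by
  have hP : B.dualSubmodule (S ⊔ Λ) = B.dualSubmodule S ⊓ Λ := by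
    rw [dualSubmodule_sup, hΛ]
  rw [dualSubmodule_sup, hL]
  apply le_antisymm
  · rintro _ ⟨hxS, hxL⟩
    obtain ⟨s, hs, l, hl, rfl⟩ := mem_sup.mp hxL
    have hlS : l ∈ B.dualSubmodule S := by
      simpa using sub_mem hxS (hS hs)
    exact add_mem_sup hs (hP ▸ ⟨hlS, hl⟩)
  · exact sup_le (le_inf hS le_sup_left)
      (hP ▸ le_inf inf_le_left (inf_le_right.trans le_sup_right))

end DualSubmodule

section Lattice

variable {R K V : Type*} [CommRing R] [IsDomain R] [IsPrincipalIdealRing R] [Field K]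
  [Algebra R K] [IsFractionRing R K] [AddCommGroup V] [Module K V] [Module R V]
  [IsScalarTower R K V] (B : BilinForm K V) (hB : B.Nondegenerate)
include hB

theorem isLattice_dualSubmodule (L : Submodule R V) [IsLattice K L] :
    IsLattice K (B.dualSubmodule L) := by
  classical
  rw [← (Free.chooseBasis R L).span_extendOfIsLattice (K := K), dualSubmodule_span_of_basis B hB]
  exact Basis.isLattice_span _

theorem dualSubmodule_dualSubmodule_flip_of_isLattice (L : Submodule R V) [IsLattice K L] :
    B.dualSubmodule (B.flip.dualSubmodule L) = L := by
  rw [← (Free.chooseBasis R L).span_extendOfIsLattice (K := K)]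
  exact dualSubmodule_dualSubmodule_flip_of_basis B hB _

end Lattice

end LinearMap.BilinForm

open LinearMap.BilinForm in
theorem selfdual_lattice_from_integrable_submodule_general
    (k : Type*) [Field k] (W : Type*) [AddCommGroup W]
    [Module (LaurentSeries k) W] [Module (PowerSeries k) W]
    [IsScalarTower (PowerSeries k) (LaurentSeries k) W]
    (B : W →ₗ[LaurentSeries k] W →ₗ[LaurentSeries k] LaurentSeries k)
    (hndl : ∀ w, (∀ x, B w x = 0) → w = 0)
    (hndr : ∀ w, (∀ x, B x w = 0) → w = 0)
    (hsymOrAlt : (∀ x y, B x y = B y x) ∨ (∀ x, B x x = 0))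
    (Λ : Submodule (PowerSeries k) W)
    (hΛfg : Λ.FG) (hΛspan : Submodule.span (LaurentSeries k) (Λ : Set W) = ⊤)
    (hΛself : ∀ w : W,
      (∀ x ∈ Λ, B w x ∈ Set.range (algebraMap (PowerSeries k) (LaurentSeries k))) ↔ w ∈ Λ)
    (S : Submodule (PowerSeries k) W) (hSfg : S.FG)
    (hSint : ∀ x ∈ S, ∀ y ∈ S,
      B x y ∈ Set.range (algebraMap (PowerSeries k) (LaurentSeries k))) :
    ∃ P M : Submodule (PowerSeries k) W,
      (∀ w : W, w ∈ P ↔ ∀ x ∈ S ⊔ Λ,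
        B w x ∈ Set.range (algebraMap (PowerSeries k) (LaurentSeries k)))
      ∧ M = S ⊔ P
      ∧ M.FG
      ∧ Submodule.span (LaurentSeries k) (M : Set W) = ⊤
      ∧ (∀ w : W,
          (∀ x ∈ M, B w x ∈ Set.range (algebraMap (PowerSeries k) (LaurentSeries k)))
            ↔ w ∈ M) := by
  have hB : B.Nondegenerate := ⟨hndl, hndr⟩
  have hΛ : dualSubmodule B Λ = Λ := by
    ext w
    rw [mem_dualSubmodule_iff_forall_mem_range, hΛself]
  have hS : S ≤ dualSubmodule B S := fun x hx =>
    mem_dualSubmodule_iff_forall_mem_range.mpr (hSint x hx)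
  have : IsLattice (LaurentSeries k) Λ := ⟨hΛfg, hΛspan⟩
  have : IsLattice (LaurentSeries k) (S ⊔ Λ) :=
    IsLattice.of_le_of_isLattice_of_fg _ le_sup_right (hSfg.sup hΛfg)
  have hL : dualSubmodule B (dualSubmodule B (S ⊔ Λ)) = S ⊔ Λ := by
    rw [← flip_dualSubmodule_of_isSymm_or_isAlt (hsymOrAlt.imp isSymm_def.mpr id) (S ⊔ Λ),
      dualSubmodule_dualSubmodule_flip_of_isLattice B hB]
  have := isLattice_dualSubmodule B hB (S ⊔ Λ)
  have hM : IsLattice (LaurentSeries k) (S ⊔ dualSubmodule B (S ⊔ Λ)) :=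
    IsLattice.of_le_of_isLattice_of_fg _ le_sup_right (hSfg.sup IsLattice.fg)
  refine ⟨dualSubmodule B (S ⊔ Λ), _, fun w => mem_dualSubmodule_iff_forall_mem_range, rfl,
    hM.fg, hM.span_eq_top, fun w => ?_⟩
  rw [← mem_dualSubmodule_iff_forall_mem_range,
    dualSubmodule_sup_dualSubmodule_sup_eq_self B hΛ hS hL]

/-- Let `O = k[[t]]`, `F = k((t))`, and let `W` be a finite-dimensional `F`-vector space with
a nondegenerate `F`-bilinear form `B`, symmetric or alternating.  Let `Λ` be a self-dual
`O`-lattice in `W` (`Λ^⊥ = Λ`, where `Λ^⊥ = {w : B(w,x) ∈ O for all x ∈ Λ}`), and let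
`S ⊆ W` be a finitely generated `O`-submodule with `B(S,S) ⊆ O`.  Then
`M := S + (S+Λ)^⊥` is a self-dual `O`-lattice in `W`: `M` is a finitely generated
`O`-submodule spanning `W` over `F` with `M^⊥ = M`.  (Below `P` is the `O`-submodule
whose underlying set is `(S+Λ)^⊥`.) -/
theorem selfdual_lattice_from_integrable_submodule
    (k : Type*) [Field k] (W : Type*) [AddCommGroup W]
    [Module (LaurentSeries k) W] [Module (PowerSeries k) W]
    [IsScalarTower (PowerSeries k) (LaurentSeries k) W]
    [FiniteDimensional (LaurentSeries k) W]
    (B : W →ₗ[LaurentSeries k] W →ₗ[LaurentSeries k] LaurentSeries k)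
    (hndl : ∀ w, (∀ x, B w x = 0) → w = 0)
    (hndr : ∀ w, (∀ x, B x w = 0) → w = 0)
    (hsymOrAlt : (∀ x y, B x y = B y x) ∨ (∀ x, B x x = 0))
    (Λ : Submodule (PowerSeries k) W)
    (hΛfg : Λ.FG) (hΛspan : Submodule.span (LaurentSeries k) (Λ : Set W) = ⊤)
    (hΛself : ∀ w : W,
      (∀ x ∈ Λ, B w x ∈ Set.range (algebraMap (PowerSeries k) (LaurentSeries k))) ↔ w ∈ Λ)
    (S : Submodule (PowerSeries k) W) (hSfg : S.FG)
    (hSint : ∀ x ∈ S, ∀ y ∈ S,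
      B x y ∈ Set.range (algebraMap (PowerSeries k) (LaurentSeries k))) :
    ∃ P M : Submodule (PowerSeries k) W,
      (∀ w : W, w ∈ P ↔ ∀ x ∈ S ⊔ Λ,
        B w x ∈ Set.range (algebraMap (PowerSeries k) (LaurentSeries k)))
      ∧ M = S ⊔ P
      ∧ M.FG
      ∧ Submodule.span (LaurentSeries k) (M : Set W) = ⊤
      ∧ (∀ w : W,
          (∀ x ∈ M, B w x ∈ Set.range (algebraMap (PowerSeries k) (LaurentSeries k)))
            ↔ w ∈ M) :=
  selfdual_lattice_from_integrable_submodule_general k W B hndl hndr hsymOrAlt Λ hΛfg hΛspan hΛself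
    S hSfg hSint
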